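/- In the setting of PCQR (exchangeable $(X_1,Y_1),\ldots,(X_{n+1},Y_{n+1})$ in $\mathcal{X} \times \mathbb{R}$; for each $x$, $\hat{Q}_x:(0,1)\to\mathbb{R}$ continuous strictly increasing with inverse $\hat{F}_x$; conformity scores $S_i = |\tfrac{1}{2} - \hat{F}_{X_i}(Y_i)|$ almost surely pairwise distinct; $S_{(i)}$ the $i$-th smallest of $S_1,\ldots,S_n$; $\mathrm{PCQR}(x,s) = [\hat{Q}_x(\tfrac{1}{2}-s), \hat{Q}_x(\tfrac{1}{2}+s)]$), for every $\delta$ with $\frac{1}{n+1} \leq \delta < 1$, the coverage probabilities of the two PCQR intervals differ by at most $\frac{1}{n+1}$: $P\left(Y_{n+1} \in \mathrm{PCQR}(X_{n+1}, S_{(\lceil (1-\delta)(n+1) \rceil)})\right) - P\left(Y_{n+1} \in \mathrm{PCQR}(X_{n+1}, S_{(\lfloor (1-\delta)(n+1) \rfloor)})\right) \leq \frac{1}{n+1}$. -/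

import Mathlib

open MeasureTheory
open scoped ENNReal

/-- The `i`-th order statistic (1-based) of the values `v 0, …, v (n-1)`: the `i`-th
smallest value, expressed as the least `x` such that at least `i` of the values are `≤ x`. -/
noncomputable def orderStat (n : ℕ) (v : Fin n → ℝ) (i : ℕ) : ℝ :=
  sInf {x : ℝ | i ≤ (Finset.univ.filter (fun j : Fin n => v j ≤ x)).card}

/-! Let `k = ⌊(1 - δ)(n + 1)⌋`. Unless the ceiling equals the floor (and the two events coincide),
the ceiling is `k + 1 ≤ n`. Since `y ∈ PCQR(x, s)` iff the score of `(x, y)` is at most `s`, the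
test point is covered by the larger interval but not by the smaller one exactly when its score
lies in `(S_(k), S_(k+1)]`, i.e. when exactly `k` of the other `n` scores are below it. By
exchangeability all `n + 1` indices have rank `k` with the same probability, and as the scores are
a.s. distinct these `n + 1` events are a.s. disjoint, so each has probability at most `1/(n+1)`. -/

open Finset Set Function

section OrderStatistics

variable {n : ℕ} (v : Fin n → ℝ) {i : ℕ}

theorem orderStat_zero : orderStat n v 0 = 0 := by
  simp [orderStat]

theorem exists_apply_le_card_filter_le_eq {x : ℝ} (hx : ∃ j, v j ≤ x) :
    ∃ j, v j ≤ x ∧ #{k | v k ≤ v j} = #{k | v k ≤ x} := by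
  obtain ⟨j, hj, hmax⟩ := exists_max_image {k | v k ≤ x} v (by simpa [Finset.Nonempty] using hx)
  have hjx : v j ≤ x := (mem_filter.1 hj).2
  exact ⟨j, hjx, congr_arg card <| filter_congr fun k _ =>
    ⟨fun h => h.trans hjx, fun h => hmax k (by simpa using h)⟩⟩

theorem exists_isLeast_apply (hi : 1 ≤ i) (hin : i ≤ n) :
    ∃ j, IsLeast {x : ℝ | i ≤ #{k | v k ≤ x}} (v j) := by
  have : Nonempty (Fin n) := ⟨⟨0, by omega⟩⟩
  obtain ⟨jmax, -, hjmax⟩ := exists_max_image univ v univ_nonempty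
  have hne : ({j | i ≤ #{k | v k ≤ v j}} : Finset (Fin n)).Nonempty :=
    ⟨jmax, by simpa [filter_true_of_mem fun k _ => hjmax k (mem_univ k)] using hin⟩
  obtain ⟨j, hj, hmin⟩ := exists_min_image _ v hne
  refine ⟨j, (mem_filter.1 hj).2, fun x hx => ?_⟩
  obtain ⟨l, hlx, hl⟩ := exists_apply_le_card_filter_le_eq v (x := x) <| by
    obtain ⟨l, hl⟩ := card_pos.1 (hi.trans hx)
    exact ⟨l, (mem_filter.1 hl).2⟩
  exact (hmin l (mem_filter.2 ⟨mem_univ l, hl ▸ hx⟩)).trans hlx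

theorem isLeast_orderStat (hi : 1 ≤ i) (hin : i ≤ n) :
    IsLeast {x : ℝ | i ≤ #{k | v k ≤ x}} (orderStat n v i) := by
  obtain ⟨j, hj⟩ := exists_isLeast_apply v hi hin
  rw [orderStat, hj.csInf_eq]
  exact hj

theorem orderStat_mem_range (hi : 1 ≤ i) (hin : i ≤ n) : orderStat n v i ∈ range v := by
  obtain ⟨j, hj⟩ := exists_isLeast_apply v hi hin
  exact ⟨j, hj.csInf_eq.symm⟩

theorem orderStat_mem {s : Set ℝ} (h0 : 0 ∈ s) (hv : ∀ j, v j ∈ s) (hin : i ≤ n) :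
    orderStat n v i ∈ s := by
  rcases Nat.eq_zero_or_pos i with rfl | hi
  · rwa [orderStat_zero]
  · obtain ⟨j, hj⟩ := orderStat_mem_range v hi hin
    exact hj ▸ hv j

theorem le_card_filter_le_orderStat (hi : 1 ≤ i) (hin : i ≤ n) :
    i ≤ #{j | v j ≤ orderStat n v i} :=
  (isLeast_orderStat v hi hin).1

theorem card_filter_lt_orderStat_lt (hi : 1 ≤ i) (hin : i ≤ n) :
    #{j | v j < orderStat n v i} < i := by
  by_contra! h
  obtain ⟨j, hj, hmax⟩ :=
    exists_max_image {k | v k < orderStat n v i} v (card_pos.1 (hi.trans h))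
  have hjmem : i ≤ #{k | v k ≤ v j} :=
    h.trans <| card_le_card fun k hk => by simpa using hmax k hk
  exact (mem_filter.1 hj).2.not_ge ((isLeast_orderStat v hi hin).2 hjmem)

theorem card_filter_lt_eq_of_orderStat_lt_of_le {k : ℕ} (hk : k + 1 ≤ n) {a : ℝ}
    (hlow : orderStat n v k < a) (hup : a ≤ orderStat n v (k + 1)) : #{j | v j < a} = k := by
  apply le_antisymm
  · have hlt := card_filter_lt_orderStat_lt v (Nat.le_add_left 1 k) hk
    have hsub : #{j | v j < a} ≤ #{j | v j < orderStat n v (k + 1)} :=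
      card_le_card fun j hj => by simpa using (mem_filter.1 hj).2.trans_le hup
    omega
  · rcases Nat.eq_zero_or_pos k with rfl | hk0
    · exact Nat.zero_le _
    · exact (le_card_filter_le_orderStat v hk0 (by omega)).trans <|
        card_le_card fun j hj => by simpa using (mem_filter.1 hj).2.trans_lt hlow

end OrderStatistics

section Rank

variable {ι : Type*} [Fintype ι]

noncomputable def rank (w : ι → ℝ) (i : ι) : ℕ := #{j | w j < w i}

theorem rank_lt_rank {w : ι → ℝ} {i j : ι} (h : w i < w j) : rank w i < rank w j := by
  refine card_lt_card <|
    (Finset.ssubset_iff_of_subset fun k hk => ?_).2 ⟨i, by simpa using h, by simp⟩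
  simpa using (mem_filter.1 hk).2.trans h

theorem rank_injective {w : ι → ℝ} (hw : Injective w) : Injective (rank w) := by
  intro i j h
  by_contra hij
  rcases (hw.ne hij).lt_or_gt with hlt | hlt
  · exact (rank_lt_rank hlt).ne h
  · exact (rank_lt_rank hlt).ne' h

theorem rank_comp_perm (w : ι → ℝ) (σ : Equiv.Perm ι) (i : ι) :
    rank (w ∘ σ) i = rank w (σ i) :=
  card_equiv σ fun j => by simp

theorem rank_last {n : ℕ} (w : Fin (n + 1) → ℝ) :
    rank w (Fin.last n) = #{j : Fin n | w j.castSucc < w (Fin.last n)} := by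
  simp only [rank, card_filter, Fin.sum_univ_castSucc, lt_irrefl, if_false, add_zero]

theorem measurable_rank (i : ι) : Measurable fun w : ι → ℝ => rank w i := by
  simp_rw [rank, card_filter]
  exact Finset.measurable_sum _ fun j _ => Measurable.ite
    (measurableSet_lt (measurable_pi_apply j) (measurable_pi_apply i)) measurable_const
    measurable_const

end Rank

section Exchangeable

variable {Ω α ι : Type*} [MeasurableSpace Ω] [MeasurableSpace α] [Fintype ι]

theorem card_mul_measure_le_of_pairwise_aedisjoint {μ : Measure Ω} {E : ι → Set Ω}
    (hE : ∀ i, NullMeasurableSet (E i) μ) (hdisj : Pairwise (AEDisjoint μ on E))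
    (heq : ∀ i j, μ (E i) = μ (E j)) (i : ι) : Fintype.card ι * μ (E i) ≤ μ univ :=
  calc Fintype.card ι * μ (E i) = ∑ j, μ (E j) := by simp [heq _ i]
    _ ≤ μ univ := sum_measure_le_measure_univ (fun j _ => hE j) fun _ _ _ _ hjk => hdisj hjk

variable [DecidableEq ι] {P : Measure Ω} {Z : ι → Ω → α} {g : α → ℝ}

theorem measure_rank_eq_of_exchangeable (hZ : ∀ i, Measurable (Z i))
    (hexch : ∀ σ : Equiv.Perm ι, P.map (fun ω i => Z (σ i) ω) = P.map (fun ω i => Z i ω))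
    (hg : Measurable g) (k : ℕ) (i j : ι) :
    P {ω | rank (fun l => g (Z l ω)) i = k} = P {ω | rank (fun l => g (Z l ω)) j = k} := by
  set M := {z : ι → α | rank (fun l => g (z l)) j = k}
  have hM : MeasurableSet M := (measurable_rank j).comp
    (measurable_pi_lambda _ fun l => hg.comp (measurable_pi_apply l)) (measurableSet_singleton k)
  have hpre : {ω | rank (fun l => g (Z l ω)) i = k} =
      (fun ω l => Z (Equiv.swap i j l) ω) ⁻¹' M := by
    ext ω
    change _ ↔ rank ((fun l => g (Z l ω)) ∘ Equiv.swap i j) j = k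
    rw [rank_comp_perm, Equiv.swap_apply_right]
    rfl
  rw [hpre, ← Measure.map_apply (measurable_pi_lambda _ fun l => hZ _) hM, hexch,
    Measure.map_apply (measurable_pi_lambda _ hZ) hM]
  rfl

theorem measure_rank_eq_le_inv_card [IsProbabilityMeasure P] (hZ : ∀ i, Measurable (Z i))
    (hexch : ∀ σ : Equiv.Perm ι, P.map (fun ω i => Z (σ i) ω) = P.map (fun ω i => Z i ω))
    (hg : Measurable g) (hdist : ∀ᵐ ω ∂P, Pairwise fun i j => g (Z i ω) ≠ g (Z j ω))
    (k : ℕ) (i : ι) :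
    P {ω | rank (fun l => g (Z l ω)) i = k} ≤ (Fintype.card ι : ℝ≥0∞)⁻¹ := by
  have hmeas : ∀ i, MeasurableSet {ω | rank (fun l => g (Z l ω)) i = k} := fun i =>
    (measurable_rank i).comp (measurable_pi_lambda _ fun l => hg.comp (hZ l))
      (measurableSet_singleton k)
  have hdisj : Pairwise (AEDisjoint P on fun i => {ω | rank (fun l => g (Z l ω)) i = k}) :=
    fun i j hij => measure_eq_zero_iff_ae_notMem.2 <| hdist.mono fun ω hω ⟨hi, hj⟩ =>
      hij (rank_injective (injective_iff_pairwise_ne.2 hω) (hi.trans hj.symm))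
  rw [ENNReal.le_inv_iff_mul_le, mul_comm, ← measure_univ (μ := P)]
  exact card_mul_measure_le_of_pairwise_aedisjoint (fun i => (hmeas i).nullMeasurableSet) hdisj
    (measure_rank_eq_of_exchangeable hZ hexch hg k) i

end Exchangeable

section QuantileIntervals

variable {Q F : ℝ → ℝ}

theorem abs_half_sub_lt_half
    (hinv : ∀ y ∈ Q '' Ioo 0 1, ∀ α ∈ Ioo (0 : ℝ) 1, (F y = α ↔ Q α = y))
    {y : ℝ} (hy : y ∈ Q '' Ioo 0 1) : |1 / 2 - F y| < 1 / 2 := by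
  obtain ⟨α, hα, rfl⟩ := hy
  rw [(hinv _ ⟨α, hα, rfl⟩ α hα).2 rfl, abs_lt]
  constructor <;> linarith [hα.1, hα.2]

theorem mem_Icc_iff_abs_half_sub_le (hQ : StrictMonoOn Q (Ioo 0 1))
    (hinv : ∀ y ∈ Q '' Ioo 0 1, ∀ α ∈ Ioo (0 : ℝ) 1, (F y = α ↔ Q α = y))
    {y s : ℝ} (hy : y ∈ Q '' Ioo 0 1) (hs : |s| < 1 / 2) :
    y ∈ Icc (Q (1 / 2 - s)) (Q (1 / 2 + s)) ↔ |1 / 2 - F y| ≤ s := by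
  obtain ⟨α, hα, rfl⟩ := hy
  rw [abs_lt] at hs
  rw [(hinv _ ⟨α, hα, rfl⟩ α hα).2 rfl, Set.mem_Icc, abs_le,
    hQ.le_iff_le ⟨by linarith, by linarith⟩ hα, hQ.le_iff_le hα ⟨by linarith, by linarith⟩]
  constructor <;> rintro ⟨h₁, h₂⟩ <;> constructor <;> linarith

end QuantileIntervals

theorem pcqr_well_calibrated_general
    {𝓧 : Type*} [MeasurableSpace 𝓧] {Ω : Type*} [MeasurableSpace Ω]
    (P : Measure Ω) [IsProbabilityMeasure P] (n : ℕ)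
    (X : Fin (n + 1) → Ω → 𝓧) (Y : Fin (n + 1) → Ω → ℝ)
    (hmX : ∀ i, Measurable (X i)) (hmY : ∀ i, Measurable (Y i))
    (hexch : ∀ σ : Equiv.Perm (Fin (n + 1)),
      Measure.map (fun ω => fun i => (X (σ i) ω, Y (σ i) ω)) P
        = Measure.map (fun ω => fun i => (X i ω, Y i ω)) P)
    (Q F : 𝓧 → ℝ → ℝ)
    (hQmono : ∀ x, StrictMonoOn (Q x) (Set.Ioo 0 1))
    (hinv : ∀ x : 𝓧, ∀ y ∈ Q x '' Set.Ioo (0 : ℝ) 1, ∀ α ∈ Set.Ioo (0 : ℝ) 1,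
      (F x y = α ↔ Q x α = y))
    (hFmeas : Measurable (fun p : 𝓧 × ℝ => F p.1 p.2))
    (hrange : ∀ᵐ ω ∂P, ∀ i, Y i ω ∈ Q (X i ω) '' Set.Ioo (0 : ℝ) 1)
    (hdist : ∀ᵐ ω ∂P, ∀ i j : Fin (n + 1), i ≠ j →
      |1 / 2 - F (X i ω) (Y i ω)| ≠ |1 / 2 - F (X j ω) (Y j ω)|)
    (δ : ℝ) (hδ1 : 1 / (n + 1 : ℝ) ≤ δ) :
    P {ω | Y (Fin.last n) ω ∈ Set.Icc
        (Q (X (Fin.last n) ω) (1 / 2 - orderStat n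
          (fun j : Fin n => |1 / 2 - F (X j.castSucc ω) (Y j.castSucc ω)|)
          ⌈(1 - δ) * (n + 1 : ℝ)⌉₊))
        (Q (X (Fin.last n) ω) (1 / 2 + orderStat n
          (fun j : Fin n => |1 / 2 - F (X j.castSucc ω) (Y j.castSucc ω)|)
          ⌈(1 - δ) * (n + 1 : ℝ)⌉₊))}
      - P {ω | Y (Fin.last n) ω ∈ Set.Icc
        (Q (X (Fin.last n) ω) (1 / 2 - orderStat n
          (fun j : Fin n => |1 / 2 - F (X j.castSucc ω) (Y j.castSucc ω)|)
          ⌊(1 - δ) * (n + 1 : ℝ)⌋₊))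
        (Q (X (Fin.last n) ω) (1 / 2 + orderStat n
          (fun j : Fin n => |1 / 2 - F (X j.castSucc ω) (Y j.castSucc ω)|)
          ⌊(1 - δ) * (n + 1 : ℝ)⌋₊))}
      ≤ 1 / (n + 1 : ℝ≥0∞) := by
  set k := ⌊(1 - δ) * (n + 1 : ℝ)⌋₊
  have hceil : ⌈(1 - δ) * (n + 1 : ℝ)⌉₊ = k ∨ ⌈(1 - δ) * (n + 1 : ℝ)⌉₊ = k + 1 := by
    have := Nat.ceil_le_floor_add_one ((1 - δ) * (n + 1 : ℝ))
    have := Nat.floor_le_ceil ((1 - δ) * (n + 1 : ℝ))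
    omega
  rcases hceil with hceil | hceil
  · simp [hceil]
  have hkn : k + 1 ≤ n := hceil ▸ Nat.ceil_le.2 (by
    rw [div_le_iff₀ (by positivity)] at hδ1
    linarith)
  rw [hceil]
  have hrank := measure_rank_eq_le_inv_card (Z := fun i ω => (X i ω, Y i ω))
    (fun i => (hmX i).prodMk (hmY i)) hexch (measurable_const.sub hFmeas).abs hdist k (Fin.last n)
  rw [Fintype.card_fin, Nat.cast_succ, ← one_div] at hrank
  refine le_measure_sdiff.trans <| (measure_mono_ae ?_).trans hrank
  filter_upwards [hrange] with ω hr ⟨hA, hB⟩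
  set v : Fin n → ℝ := fun j => |1 / 2 - F (X j.castSucc ω) (Y j.castSucc ω)|
  have hcover : ∀ i ≤ n, Y (Fin.last n) ω ∈ Set.Icc
      (Q (X (Fin.last n) ω) (1 / 2 - orderStat n v i))
      (Q (X (Fin.last n) ω) (1 / 2 + orderStat n v i)) ↔
      |1 / 2 - F (X (Fin.last n) ω) (Y (Fin.last n) ω)| ≤ orderStat n v i := fun i hi =>
    mem_Icc_iff_abs_half_sub_le (hQmono _) (hinv _) (hr _) <|
      orderStat_mem v (s := {x | |x| < 1 / 2}) (by norm_num)
        (fun j => (abs_abs _).trans_lt (abs_half_sub_lt_half (hinv _) (hr j.castSucc))) hi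
  show rank _ (Fin.last n) = k
  rw [rank_last]
  exact card_filter_lt_eq_of_orderStat_lt_of_le v hkn
    (not_le.1 fun h => hB ((hcover k (by omega)).2 h)) ((hcover (k + 1) hkn).1 hA)

/-- calibration of PCQR: in the PCQR setting (exchangeable pairs
`(X i, Y i)`, per-input continuous strictly increasing quantile functions `Q x` with
inverse CDFs `F x`, a.s. distinct conformity scores `S i = |1/2 - F (X i) (Y i)|`),
for `1/(n+1) ≤ δ < 1` the coverage probabilities of the PCQR intervals built from the
`⌈(1-δ)(n+1)⌉`-th and `⌊(1-δ)(n+1)⌋`-th calibration order statistics differ by at most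
`1/(n+1)`. -/
theorem pcqr_well_calibrated
    {𝓧 : Type*} [MeasurableSpace 𝓧] {Ω : Type*} [MeasurableSpace Ω]
    (P : Measure Ω) [IsProbabilityMeasure P] (n : ℕ)
    (X : Fin (n + 1) → Ω → 𝓧) (Y : Fin (n + 1) → Ω → ℝ)
    (hmX : ∀ i, Measurable (X i)) (hmY : ∀ i, Measurable (Y i))
    (hexch : ∀ σ : Equiv.Perm (Fin (n + 1)),
      Measure.map (fun ω => fun i => (X (σ i) ω, Y (σ i) ω)) P
        = Measure.map (fun ω => fun i => (X i ω, Y i ω)) P)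
    (Q F : 𝓧 → ℝ → ℝ)
    (hQcont : ∀ x, ContinuousOn (Q x) (Set.Ioo 0 1))
    (hQmono : ∀ x, StrictMonoOn (Q x) (Set.Ioo 0 1))
    (hinv : ∀ x : 𝓧, ∀ y ∈ Q x '' Set.Ioo (0 : ℝ) 1, ∀ α ∈ Set.Ioo (0 : ℝ) 1,
      (F x y = α ↔ Q x α = y))
    (hQmeas : Measurable (fun p : 𝓧 × ℝ => Q p.1 p.2))
    (hFmeas : Measurable (fun p : 𝓧 × ℝ => F p.1 p.2))
    (hrange : ∀ᵐ ω ∂P, ∀ i, Y i ω ∈ Q (X i ω) '' Set.Ioo (0 : ℝ) 1)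
    (hdist : ∀ᵐ ω ∂P, ∀ i j : Fin (n + 1), i ≠ j →
      |1 / 2 - F (X i ω) (Y i ω)| ≠ |1 / 2 - F (X j ω) (Y j ω)|)
    (δ : ℝ) (hδ1 : 1 / (n + 1 : ℝ) ≤ δ) (hδ2 : δ < 1) :
    P {ω | Y (Fin.last n) ω ∈ Set.Icc
        (Q (X (Fin.last n) ω) (1 / 2 - orderStat n
          (fun j : Fin n => |1 / 2 - F (X j.castSucc ω) (Y j.castSucc ω)|)
          ⌈(1 - δ) * (n + 1 : ℝ)⌉₊))
        (Q (X (Fin.last n) ω) (1 / 2 + orderStat n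
          (fun j : Fin n => |1 / 2 - F (X j.castSucc ω) (Y j.castSucc ω)|)
          ⌈(1 - δ) * (n + 1 : ℝ)⌉₊))}
      - P {ω | Y (Fin.last n) ω ∈ Set.Icc
        (Q (X (Fin.last n) ω) (1 / 2 - orderStat n
          (fun j : Fin n => |1 / 2 - F (X j.castSucc ω) (Y j.castSucc ω)|)
          ⌊(1 - δ) * (n + 1 : ℝ)⌋₊))
        (Q (X (Fin.last n) ω) (1 / 2 + orderStat n
          (fun j : Fin n => |1 / 2 - F (X j.castSucc ω) (Y j.castSucc ω)|)
          ⌊(1 - δ) * (n + 1 : ℝ)⌋₊))}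
      ≤ 1 / (n + 1 : ℝ≥0∞) :=
  pcqr_well_calibrated_general P n X Y hmX hmY hexch Q F hQmono hinv hFmeas hrange hdist δ hδ1
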